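/- arXiv:2210.06752 — 2 statements merged into one kernel-verified Lean document; each statement's English description precedes it below -/
import Mathlib

section
/- For positive reals α, β, η with η > 1, define d ≥ 0 by cosh d = sqrt(cosh²(β/2) + cosh²(α/2) + cosh²(η/2) + 2·cosh(α/2)·cosh(β/2)·cosh(η/2) − 1)/sinh(η/2). Then there exists a universal constant M > 0 (independent of α, β, η) such that α + β ≤ 4d + η + M. -/
set_option maxHeartbeats 1000000 in
theorem collar_width_bound :
    ∃ M : ℝ, 0 < M ∧ ∀ α β η d : ℝ, 0 < α → 0 < β → 1 < η → 0 ≤ d →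
      Real.cosh d =
        Real.sqrt (Real.cosh (β / 2) ^ 2 + Real.cosh (α / 2) ^ 2 + Real.cosh (η / 2) ^ 2 +
          2 * Real.cosh (α / 2) * Real.cosh (β / 2) * Real.cosh (η / 2) - 1) /
          Real.sinh (η / 2) →
      α + β ≤ 4 * d + η + M := by
  refine ⟨1, one_pos, fun α β η d hα hβ hη hd hcosh => ?_⟩
  set A := Real.cosh (α / 2) with hA
  set B := Real.cosh (β / 2) with hB
  set H := Real.cosh (η / 2) with hH
  set S := Real.sinh (η / 2) with hS
  have hA1 : 1 ≤ A := Real.one_le_cosh _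
  have hB1 : 1 ≤ B := Real.one_le_cosh _
  have hH1 : 1 ≤ H := Real.one_le_cosh _
  have hSpos : 0 < S := Real.sinh_pos_iff.2 (by linarith)
  have hinner : (0:ℝ) ≤ B ^ 2 + A ^ 2 + H ^ 2 + 2 * A * B * H - 1 := by nlinarith [mul_nonneg (mul_nonneg (by linarith : (0:ℝ) ≤ A) (by linarith : (0:ℝ) ≤ B)) (by linarith : (0:ℝ) ≤ H), sq_nonneg A, sq_nonneg B, sq_nonneg H, hA1, hB1, hH1]
  -- square the hexagon relation
  have hsq : Real.cosh d ^ 2 * S ^ 2 = B ^ 2 + A ^ 2 + H ^ 2 + 2 * A * B * H - 1 := by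
    have h1 : Real.cosh d * S = Real.sqrt (B ^ 2 + A ^ 2 + H ^ 2 + 2 * A * B * H - 1) := by
      rw [hcosh]; field_simp
    have h2 := congrArg (· ^ 2) h1
    simpa [mul_pow, Real.sq_sqrt hinner] using h2
  -- exponential lower bounds for cosh
  have expA : Real.exp (α / 2) / 2 ≤ A := by
    rw [hA, Real.cosh_eq]; have := (Real.exp_pos (-(α / 2))).le; linarith
  have expB : Real.exp (β / 2) / 2 ≤ B := by
    rw [hB, Real.cosh_eq]; have := (Real.exp_pos (-(β / 2))).le; linarith
  have expH : Real.exp (η / 2) / 2 ≤ H := by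
    rw [hH, Real.cosh_eq]; have := (Real.exp_pos (-(η / 2))).le; linarith
  have expS : S ≤ Real.exp (η / 2) / 2 := by
    rw [hS, Real.sinh_eq]; have := (Real.exp_pos (-(η / 2))).le; linarith
  have eprod : Real.exp (α / 2) * Real.exp (β / 2) * Real.exp (η / 2)
      = Real.exp ((α + β + η) / 2) := by
    rw [← Real.exp_add, ← Real.exp_add]; ring_nf
  have ea := (Real.exp_pos (α / 2)).le
  have eb := (Real.exp_pos (β / 2)).le
  have eh := (Real.exp_pos (η / 2)).le
  -- lower bound on cosh²d · S²
  have hlow : Real.exp ((α + β + η) / 2) / 4 ≤ Real.cosh d ^ 2 * S ^ 2 := by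
    rw [hsq, ← eprod]
    nlinarith [mul_le_mul expA expB (by positivity) (by linarith),
      mul_le_mul (mul_le_mul expA expB (by positivity) (by linarith)) expH (by positivity)
        (by nlinarith)]
  -- upper bound on S²
  have hSsq : S ^ 2 ≤ Real.exp η / 4 := by
    have : S ^ 2 ≤ (Real.exp (η / 2) / 2) ^ 2 := by nlinarith
    have e2 : Real.exp (η / 2) ^ 2 = Real.exp η := by
      rw [sq, ← Real.exp_add]; norm_num
    rw [div_pow, e2] at this
    linarith
  set x := (α + β - η) / 4 with hx
  have hx2 : Real.exp x ^ 2 = Real.exp ((α + β - η) / 2) := by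
    rw [sq, ← Real.exp_add]; congr 1; rw [hx]; ring
  have hcd2 : Real.exp x ^ 2 ≤ Real.cosh d ^ 2 := by
    rw [hx2]
    have hdiv : Real.exp ((α + β + η) / 2) = Real.exp ((α + β - η) / 2) * Real.exp η := by
      rw [← Real.exp_add]; ring_nf
    have hc2 : (0:ℝ) ≤ Real.cosh d ^ 2 := sq_nonneg _
    have key := mul_le_mul_of_nonneg_left hSsq hc2
    have h2 := hlow.trans key
    rw [hdiv] at h2
    have h1 : Real.exp ((α + β - η) / 2) * Real.exp η ≤ Real.cosh d ^ 2 * Real.exp η := by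
      linarith
    exact le_of_mul_le_mul_right h1 (Real.exp_pos η)
  have hcd : Real.exp x ≤ Real.cosh d :=
    (pow_le_pow_iff_left₀ (Real.exp_pos x).le (Real.cosh_pos (x := d)).le two_ne_zero).1 hcd2
  have hde : Real.cosh d ≤ Real.exp d := by
    rw [Real.cosh_eq]
    have : Real.exp (-d) ≤ Real.exp d := Real.exp_le_exp.2 (by linarith)
    linarith
  have : x ≤ d := Real.exp_le_exp.1 (le_trans hcd hde)
  rw [hx] at this
  linarith
end

section
/- For positive reals α, β, η, the quantity D := sqrt(cosh²(β/2) + cosh²(α/2) + cosh²(η/2) + 2·cosh(α/2)·cosh(β/2)·cosh(η/2) − 1)/sinh(η/2) satisfies D ≥ cosh((α+β−η)/4) and D ≥ cosh((α−η)/2) and D ≥ cosh((β−η)/2), up to a uniform multiplicative constant; more precisely, there is a constant C > 0 such that for all α, β, η > 0 with η > 1, (1/C)·e^{max{(α−η)/2,(β−η)/2,(α+β−η)/4,0}} ≤ D ≤ C·e^{max{(α−η)/2,(β−η)/2,(α+β−η)/4,0}}. -/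
/-!
Write `a, b, c` for `α/2, β/2, η/2`. Up to factors between `1/2` and `1`, each of `cosh a`, `cosh b`,
`cosh c` is the exponential of its argument, and for `c ≥ 1/2` so is `sinh c` up to a factor in
`[1/4, 1/2]`. The radicand is a sum of positive terms, so its square root is comparable to the
largest of `e^a`, `e^b`, `e^c` and `√(e^a e^b e^c)`, i.e. to `e^m` with
`m = max a b c ((a + b + c)/2)`; dividing by `sinh c ≍ e^c` gives `e^(m - c)`, and `m - c` is the
exponent of the statement.
-/

open Real

namespace Real

lemma cosh_le_exp {x : ℝ} (hx : 0 ≤ x) : cosh x ≤ exp x := by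
  rw [← cosh_add_sinh]
  linarith [sinh_nonneg_iff.2 hx]

lemma exp_div_two_le_cosh (x : ℝ) : exp x / 2 ≤ cosh x := by
  rw [cosh_eq]
  linarith [exp_pos (-x)]

lemma sinh_le_exp_div_two (x : ℝ) : sinh x ≤ exp x / 2 := by
  rw [sinh_eq]
  linarith [exp_pos (-x)]

lemma exp_div_four_le_sinh {x : ℝ} (hx : 1 / 2 ≤ x) : exp x / 4 ≤ sinh x := by
  have hprod : exp (-x) * exp x = 1 := by rw [← exp_add]; simp
  have htwo : 2 ≤ exp x * exp x := by
    rw [← exp_add]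
    linarith [add_one_le_exp (x + x)]
  have hneg : exp (-x) ≤ exp x / 2 := by nlinarith [exp_pos (-x)]
  rw [sinh_eq]
  linarith

lemma exp_add_add_div_two_sq (a b c : ℝ) :
    exp ((a + b + c) / 2) ^ 2 = exp a * exp b * exp c := by
  rw [sq, ← exp_add, ← exp_add, ← exp_add]
  ring_nf

end Real

/-- Minus the determinant of the Gram matrix
`!![1, -cosh c, -cosh b; -cosh c, 1, -cosh a; -cosh b, -cosh a, 1]`. -/
noncomputable def coshGram (a b c : ℝ) : ℝ :=
  cosh b ^ 2 + cosh a ^ 2 + cosh c ^ 2 + 2 * cosh a * cosh b * cosh c - 1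

lemma exp_max_div_two_le_sqrt_coshGram (a b c : ℝ) :
    exp (max (max a b) (max ((a + b + c) / 2) c)) / 2 ≤ √(coshGram a b c) := by
  have hsq {t : ℝ} (h : (exp t / 2) ^ 2 ≤ coshGram a b c) : exp t ≤ 2 * √(coshGram a b c) := by
    linarith [le_sqrt_of_sq_le h]
  have hsqa := pow_le_pow_left₀ (by positivity) (exp_div_two_le_cosh a) 2
  have hsqb := pow_le_pow_left₀ (by positivity) (exp_div_two_le_cosh b) 2
  have hsqc := pow_le_pow_left₀ (by positivity) (exp_div_two_le_cosh c) 2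
  have hprod : exp a / 2 * (exp b / 2) * (exp c / 2) ≤ cosh a * cosh b * cosh c := by
    gcongr <;> exact exp_div_two_le_cosh _
  have hone_a := one_le_cosh a
  have hone_b := one_le_cosh b
  have hone_c := one_le_cosh c
  rw [div_le_iff₀' two_pos]
  simp only [exp_monotone.map_max]
  refine max_le (max_le (hsq ?_) (hsq ?_)) (max_le (hsq ?_) (hsq ?_))
  all_goals unfold coshGram; nlinarith [exp_add_add_div_two_sq a b c]

section

variable {a b c : ℝ}

lemma sqrt_coshGram_le (ha : 0 ≤ a) (hb : 0 ≤ b) (hc : 0 ≤ c) :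
    √(coshGram a b c) ≤ 3 * exp (max (max a b) (max ((a + b + c) / 2) c)) := by
  set m := max (max a b) (max ((a + b + c) / 2) c)
  have hcosh_le {x : ℝ} (hx : 0 ≤ x) (hxm : x ≤ m) : cosh x ^ 2 ≤ exp m ^ 2 :=
    pow_le_pow_left₀ (by positivity) ((cosh_le_exp hx).trans (exp_le_exp.2 hxm)) 2
  have hprod : cosh a * cosh b * cosh c ≤ exp m ^ 2 := calc
    cosh a * cosh b * cosh c ≤ exp a * exp b * exp c := by
      gcongr <;> exact cosh_le_exp ‹_›
    _ = exp ((a + b + c) / 2) ^ 2 := (exp_add_add_div_two_sq a b c).symm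
    _ ≤ exp m ^ 2 := by gcongr; exact le_max_of_le_right (le_max_left _ _)
  have hsqa := hcosh_le ha (le_max_of_le_left (le_max_left _ _))
  have hsqb := hcosh_le hb (le_max_of_le_left (le_max_right _ _))
  have hsqc := hcosh_le hc (le_max_of_le_right (le_max_right _ _))
  rw [sqrt_le_left (by positivity), mul_pow]
  unfold coshGram
  nlinarith

lemma exp_sub_le_sqrt_coshGram_div_sinh (a b : ℝ) (hc : 0 < c) :
    exp (max (max a b) (max ((a + b + c) / 2) c) - c) ≤ √(coshGram a b c) / sinh c := by
  set m := max (max a b) (max ((a + b + c) / 2) c)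
  rw [exp_sub, le_div_iff₀ (sinh_pos_iff.2 hc)]
  calc exp m / exp c * sinh c ≤ exp m / exp c * (exp c / 2) := by
        gcongr; exact sinh_le_exp_div_two c
    _ = exp m / 2 := by field_simp
    _ ≤ √(coshGram a b c) := exp_max_div_two_le_sqrt_coshGram a b c

lemma sqrt_coshGram_div_sinh_le (ha : 0 ≤ a) (hb : 0 ≤ b) (hc : 1 / 2 ≤ c) :
    √(coshGram a b c) / sinh c ≤ 12 * exp (max (max a b) (max ((a + b + c) / 2) c) - c) := by
  calc √(coshGram a b c) / sinh c
      ≤ 3 * exp (max (max a b) (max ((a + b + c) / 2) c)) / (exp c / 4) :=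
        div_le_div₀ (by positivity) (sqrt_coshGram_le ha hb (by linarith)) (by positivity)
          (exp_div_four_le_sinh hc)
    _ = 12 * exp (max (max a b) (max ((a + b + c) / 2) c) - c) := by
        rw [exp_sub]; field_simp; ring

end

theorem cosh_d_asymptotic :
    ∃ C : ℝ, 0 < C ∧ ∀ α β η : ℝ, 0 < α → 0 < β → 1 < η →
      (1 / C) * Real.exp (max (max ((α - η) / 2) ((β - η) / 2)) (max ((α + β - η) / 4) 0)) ≤
        Real.sqrt (Real.cosh (β / 2) ^ 2 + Real.cosh (α / 2) ^ 2 + Real.cosh (η / 2) ^ 2 +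
          2 * Real.cosh (α / 2) * Real.cosh (β / 2) * Real.cosh (η / 2) - 1) /
          Real.sinh (η / 2) ∧
      Real.sqrt (Real.cosh (β / 2) ^ 2 + Real.cosh (α / 2) ^ 2 + Real.cosh (η / 2) ^ 2 +
          2 * Real.cosh (α / 2) * Real.cosh (β / 2) * Real.cosh (η / 2) - 1) /
          Real.sinh (η / 2) ≤
        C * Real.exp (max (max ((α - η) / 2) ((β - η) / 2)) (max ((α + β - η) / 4) 0)) := by
  refine ⟨12, by norm_num, fun α β η hα hβ hη => ?_⟩
  have hexponent : max (max ((α - η) / 2) ((β - η) / 2)) (max ((α + β - η) / 4) 0) =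
      max (max (α / 2) (β / 2)) (max ((α / 2 + β / 2 + η / 2) / 2) (η / 2)) - η / 2 := by
    rw [← max_sub_sub_right, ← max_sub_sub_right, ← max_sub_sub_right]
    ring_nf
  rw [hexponent]
  have hlower := exp_sub_le_sqrt_coshGram_div_sinh (α / 2) (β / 2) (by linarith : 0 < η / 2)
  exact ⟨(mul_le_of_le_one_left (exp_pos _).le (by norm_num)).trans hlower,
    sqrt_coshGram_div_sinh_le (by linarith) (by linarith) (by linarith)⟩
end
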